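/- arXiv:2102.11306 — 3 statements merged into one kernel-verified Lean document; each statement's English description precedes it below -/
import Mathlib

section
/- Let w = w_0w_1⋯w_n be a generalized snake word of length n ≥ 1, and let k be the largest index with w_k ≠ w_n (0 ≤ k ≤ n−1). Then the number of filters of P(w) equals the number of filters of P(w_0⋯w_{n−1}) plus n − k + 3. -/
/-- The two-letter alphabet `{L, R}` for generalized snake words. -/
inductive Letter : Type
  | L
  | R
  deriving DecidableEq

/-- The element of the generalized snake poset covered by `2m+2` (besides the relations
coming from `2m+3`): it is `2m-1` when the word turns at the `m`-th letter
(i.e. `m = 1` and `w 1 = L`, or `m ≥ 2` and `w (m-1) ≠ w m`), and `2m` otherwise. -/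
def snakeSide (w : ℕ → Letter) (m : ℕ) : ℕ :=
  if (m = 1 ∧ w 1 = Letter.L) ∨ (2 ≤ m ∧ w (m - 1) ≠ w m) then 2 * m - 1 else 2 * m

/-- The covering relation of the generalized snake poset `P(w)` for the word
`ε w₁ ⋯ w_n` (the letter `w i` for `1 ≤ i ≤ n` is the `i`-th letter).
`SnakeCov n w a b` means `a ≺ b`, i.e. `a` is covered by `b`. -/
inductive SnakeCov (n : ℕ) (w : ℕ → Letter) : ℕ → ℕ → Prop
  | cov10 : SnakeCov n w 1 0
  | cov20 : SnakeCov n w 2 0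
  | cov31 : SnakeCov n w 3 1
  | cov32 : SnakeCov n w 3 2
  | covOdd (m : ℕ) (h1 : 1 ≤ m) (h2 : m ≤ n) : SnakeCov n w (2 * m + 3) (2 * m + 1)
  | covBot (m : ℕ) (h1 : 1 ≤ m) (h2 : m ≤ n) : SnakeCov n w (2 * m + 3) (2 * m + 2)
  | covSide (m : ℕ) (h1 : 1 ≤ m) (h2 : m ≤ n) : SnakeCov n w (2 * m + 2) (snakeSide w m)

/-- The order relation of the generalized snake poset `P(w)` on `{0, …, 2n+3}`:
the reflexive-transitive closure of the covering relation. -/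
def SnakeLE (n : ℕ) (w : ℕ → Letter) : ℕ → ℕ → Prop :=
  Relation.ReflTransGen (SnakeCov n w)

theorem snakeCov_lt {n : ℕ} {w : ℕ → Letter} {a b : ℕ} (h : SnakeCov n w a b) : b < a := by
  cases h
  case covSide m h1 h2 => unfold snakeSide; split <;> omega
  all_goals omega

theorem snakeLE_le {n : ℕ} {w : ℕ → Letter} {a b : ℕ} (h : SnakeLE n w a b) : b ≤ a := by
  induction h with
  | refl => exact le_refl a
  | tail _ hc ih => exact le_trans (le_of_lt (snakeCov_lt hc)) ih

/-- The generalized snake poset `P(ε w₁ ⋯ w_n)` as a type: its elements are `0, 1, …, 2n+3`. -/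
def SnakePoset (n : ℕ) (w : ℕ → Letter) : Type := Fin (2 * n + 4)

instance (n : ℕ) (w : ℕ → Letter) : PartialOrder (SnakePoset n w) where
  le a b := SnakeLE n w a.1 b.1
  le_refl _ := Relation.ReflTransGen.refl
  le_trans _ _ _ h1 h2 := Relation.ReflTransGen.trans h1 h2
  le_antisymm a b h1 h2 := Fin.ext (Nat.le_antisymm (snakeLE_le h2) (snakeLE_le h1))

/-- The number of linear extensions of `P(ε w₁ ⋯ w_n)`: order-preserving bijections
onto the chain `Fin (2n+4)`.  By Stanley's theorem this is the normalized volume of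
the order polytope `O(P(w))`. -/
noncomputable def linExtCount (n : ℕ) (w : ℕ → Letter) : ℕ :=
  Nat.card {f : SnakePoset n w ≃ Fin (2 * n + 4) //
    ∀ a b : SnakePoset n w, a ≤ b → f a ≤ f b}

/-- The collection of filters (upper order ideals) of `P(ε w₁ ⋯ w_n)`,
as subsets of `{0, …, 2n+3} ⊆ ℕ`. -/
def SnakeFilters (n : ℕ) (w : ℕ → Letter) : Set (Set ℕ) :=
  {A | (∀ a ∈ A, a < 2 * n + 4) ∧ ∀ a ∈ A, ∀ b, SnakeLE n w a b → b ∈ A}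

/-- The filter of `P(ε w₁ ⋯ w_n)` generated by a set `S`: its upward closure. -/
def snakeUp (n : ℕ) (w : ℕ → Letter) (S : Set ℕ) : Set ℕ :=
  {b | ∃ a ∈ S, SnakeLE n w a b}

/-- The alternating word `L R L R ⋯` (letter `i` is `L` for odd `i`),
defining the snake poset `S_n = P(ε L R L R ⋯)`. -/
def altWord : ℕ → Letter := fun i => if i % 2 = 1 then Letter.L else Letter.R

/-- Flipping a letter `L ↔ R`. -/
def Letter.flip : Letter → Letter
  | Letter.L => Letter.R
  | Letter.R => Letter.L

/-- The swap operation `f_i`: flip all letters with index `≥ i`. -/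
def swapFrom (w : ℕ → Letter) (i : ℕ) : ℕ → Letter :=
  fun j => if i ≤ j then (w j).flip else w j

/-- Membership in `𝒱`: the letter sequence `w₁ ⋯ w_n` contains neither `LRL` nor
`RLR` as a consecutive substring. -/
def InV (n : ℕ) (w : ℕ → Letter) : Prop :=
  ∀ i, 1 ≤ i → i + 2 ≤ n → w i = w (i + 1) ∨ w (i + 1) = w (i + 2)

/-- The order on `{0, …, 2n+5}` making `P̂(w)`: the poset `P(w)` (elements `0, …, 2n+3`)
with a new maximum `2n+4` and a new minimum `2n+5` adjoined. -/
def SnakeHatLE (n : ℕ) (w : ℕ → Letter) (a b : ℕ) : Prop :=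
  a = 2 * n + 5 ∨ b = 2 * n + 4 ∨ (a < 2 * n + 4 ∧ b < 2 * n + 4 ∧ SnakeLE n w a b)

/-- The lattice `P̂(w)`: `P(w)` with a new minimum `0̂ = 2n+5` and maximum `1̂ = 2n+4`. -/
def SnakeHat (n : ℕ) (w : ℕ → Letter) : Type := Fin (2 * n + 6)

instance (n : ℕ) (w : ℕ → Letter) : PartialOrder (SnakeHat n w) where
  le a b := SnakeHatLE n w a.1 b.1
  le_refl a := by
    by_cases h5 : a.1 = 2 * n + 5
    · exact Or.inl h5
    · by_cases h4 : a.1 = 2 * n + 4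
      · exact Or.inr (Or.inl h4)
      · have := a.2
        exact Or.inr (Or.inr ⟨by omega, by omega, Relation.ReflTransGen.refl⟩)
  le_trans a b c hab hbc := by
    rcases hab with h | h | ⟨ha, hb, hab⟩
    · exact Or.inl h
    · rcases hbc with h' | h' | ⟨hb', hc, hbc⟩
      · exact absurd h' (by omega)
      · exact Or.inr (Or.inl h')
      · exact absurd h (by omega)
    · rcases hbc with h' | h' | ⟨hb', hc, hbc⟩
      · exact absurd h' (by omega)
      · exact Or.inr (Or.inl h')
      · exact Or.inr (Or.inr ⟨ha, hc, Relation.ReflTransGen.trans hab hbc⟩)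
  le_antisymm a b h1 h2 := by
    apply Fin.ext
    rcases h1 with h | h | ⟨ha, hb, hab⟩ <;>
      rcases h2 with h' | h' | ⟨ha', hb', hba⟩ <;>
        first
          | omega
          | exact Nat.le_antisymm (snakeLE_le hba) (snakeLE_le hab)

/-- An element `x` of a (finite) lattice is meet-irreducible if it is not the maximum
element and whenever `x` is the meet (greatest lower bound) of `y` and `z`,
one has `x = y` or `x = z`. -/
def MeetIrred {α : Type*} [PartialOrder α] (x : α) : Prop :=
  ¬IsTop x ∧ ∀ y z : α, IsGLB {y, z} x → x = y ∨ x = z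

/-- The poset `Q_w` of meet-irreducible elements of `P̂(w)`, as an induced subposet. -/
abbrev SnakeQ (n : ℕ) (w : ℕ → Letter) : Type :=
  {x : SnakeHat n w // MeetIrred x}

/-- The vertex set of the order polytope `O(α)` of a finite poset `α`: the 0/1 indicator
vectors of the filters of `α`. -/
def OPVertexSet (α : Type*) [PartialOrder α] : Set (α → ℝ) :=
  {v | ∃ A : Set α, (∀ a ∈ A, ∀ b, a ≤ b → b ∈ A) ∧ v = A.indicator fun _ => (1 : ℝ)}

/-- A circuit of a point configuration: an affinely dependent set all of whose proper
subsets are affinely independent. -/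
def IsAffCircuit {α : Type*} (Z : Set (α → ℝ)) : Prop :=
  ¬AffineIndependent ℝ (Subtype.val : Z → (α → ℝ)) ∧
    ∀ Y : Set (α → ℝ), Y ⊂ Z → AffineIndependent ℝ (Subtype.val : Y → (α → ℝ))

/-- The adjacency relation of the graph `G(w)` on vertices `{0, 1, …, n}`:
consecutive indices are adjacent, and `i` and `i+2` are adjacent when
`w (i+1) ≠ w (i+2)` (a turn of the word). -/
def snakeAdj (n : ℕ) (w : ℕ → Letter) (i j : ℕ) : Prop :=
  (j = i + 1 ∧ j ≤ n) ∨ (i = j + 1 ∧ i ≤ n) ∨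
    (j = i + 2 ∧ j ≤ n ∧ w (i + 1) ≠ w (i + 2)) ∨
    (i = j + 2 ∧ i ≤ n ∧ w (j + 1) ≠ w (j + 2))

/-- `𝒢(w)`: the collection of nonempty subsets of `{0, …, n}` inducing connected
subgraphs of `G(w)`. -/
def GSets (n : ℕ) (w : ℕ → Letter) : Set (Set ℕ) :=
  {S | S.Nonempty ∧ (∀ i ∈ S, i ≤ n) ∧
    ∀ a ∈ S, ∀ b ∈ S,
      Relation.ReflTransGen (fun x y => x ∈ S ∧ y ∈ S ∧ snakeAdj n w x y) a b}

/-!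
A filter of `P(w)` either contains the new minimum `2n+5`, and then it is everything; or it
avoids both new elements, and then it is a filter of `P(w₀⋯wₙ)`; or it is `{2n+4} ∪ B` for a
filter `B` of `P(w₀⋯wₙ)` containing the element `s` that `2n+4` covers. Since the word runs
straight after its last turn at `k`, the principal filter of `s` misses exactly a chain of
`n - k + 2` elements, so the possible `B` are that principal filter together with an initial
segment of the chain: there are `n - k + 3` of them.
-/

open Set

section Chain

variable {α : Type*} {F : Set (Set α)} {U : Set α} {c : ℕ → α} {m : ℕ}

lemma chain_mem_of_le {B : Set α} (hstep : ∀ j, j + 1 < m → c (j + 1) ∈ B → c j ∈ B)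
    {i j : ℕ} (hij : i ≤ j) (hj : j < m) (h : c j ∈ B) : c i ∈ B := by
  induction j, hij using Nat.le_induction with
  | base => exact h
  | succ j _ ih => exact ih (by omega) (hstep j hj h)

lemma ncard_eq_of_initial_segments (hcU : ∀ j < m, c j ∉ U) (hc : InjOn c (Iio m))
    (hF : ∀ B ∈ F, U ⊆ B ∧ B ⊆ U ∪ c '' Iio m)
    (hstep : ∀ B ∈ F, ∀ j, j + 1 < m → c (j + 1) ∈ B → c j ∈ B)
    (hmem : ∀ i ≤ m, U ∪ c '' Iio i ∈ F) :
    F.ncard = m + 1 := by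
  classical
  have hF_eq : F = (fun i => U ∪ c '' Iio i) '' Iic m := by
    refine Subset.antisymm (fun B hB => ?_) (image_subset_iff.2 hmem)
    have hex : ∃ i, i = m ∨ c i ∉ B := ⟨m, Or.inl rfl⟩
    set i := Nat.find hex
    have hi : i ≤ m := Nat.find_min' hex (Or.inl rfl)
    have below : ∀ j < i, c j ∈ B := fun j hj =>
      not_not.1 (not_or.1 (Nat.find_min hex hj)).2
    have above : ∀ j, i ≤ j → j < m → c j ∉ B := fun j hij hjm hj => by
      rcases Nat.find_spec hex with h | h
      · omega
      · exact h (chain_mem_of_le (hstep B hB) hij hjm hj)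
    refine ⟨i, hi, Subset.antisymm ?_ fun x hx => ?_⟩
    · rintro x (hx | ⟨j, hj, rfl⟩)
      exacts [(hF B hB).1 hx, below j hj]
    · rcases (hF B hB).2 hx with hx | ⟨j, hj, rfl⟩
      · exact Or.inl hx
      · exact Or.inr ⟨j, not_le.1 fun h => above j h hj hx, rfl⟩
  have hinj : InjOn (fun i => U ∪ c '' Iio i) (Iic m) := by
    have key : ∀ i j, i < j → j ≤ m → U ∪ c '' Iio i ≠ U ∪ c '' Iio j := by
      intro i j hij hj heq
      have hci : c i ∈ U ∪ c '' Iio i := heq ▸ Or.inr ⟨i, hij, rfl⟩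
      rcases hci with h | ⟨l, hl, hcl⟩
      · exact hcU i (by omega) h
      · rw [mem_Iio] at hl
        exact absurd (hc (mem_Iio.2 (by omega)) (mem_Iio.2 (by omega)) hcl) (by omega)
    intro i hi j hj heq
    rcases lt_trichotomy i j with h | h | h
    exacts [absurd heq (key i j h hj), h, absurd heq.symm (key j i h hi)]
  rw [hF_eq, hinj.ncard_image, ncard_Iic_nat]

end Chain

section Basic

variable {n : ℕ} {w : ℕ → Letter}

lemma snakeSide_eq_or (w : ℕ → Letter) (m : ℕ) :
    snakeSide w m = 2 * m - 1 ∨ snakeSide w m = 2 * m := by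
  unfold snakeSide; split <;> simp

lemma snakeSide_of_eq {m : ℕ} (hm : 2 ≤ m) (h : w (m - 1) = w m) :
    snakeSide w m = 2 * m := by
  rw [snakeSide, if_neg]
  rintro (⟨rfl, -⟩ | ⟨-, hne⟩)
  exacts [by omega, hne h]

lemma snakeSide_of_ne {m : ℕ} (hm : 2 ≤ m) (h : w (m - 1) ≠ w m) :
    snakeSide w m = 2 * m - 1 :=
  if_pos (Or.inr ⟨hm, h⟩)

lemma SnakeCov.succ {a b : ℕ} (h : SnakeCov n w a b) : SnakeCov (n + 1) w a b := by
  cases h with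
  | cov10 => exact .cov10
  | cov20 => exact .cov20
  | cov31 => exact .cov31
  | cov32 => exact .cov32
  | covOdd m h1 h2 => exact .covOdd m h1 (by omega)
  | covBot m h1 h2 => exact .covBot m h1 (by omega)
  | covSide m h1 h2 => exact .covSide m h1 (by omega)

lemma SnakeCov.of_succ {a b : ℕ} (h : SnakeCov (n + 1) w a b) (ha : a < 2 * n + 4) :
    SnakeCov n w a b := by
  cases h with
  | cov10 => exact .cov10
  | cov20 => exact .cov20
  | cov31 => exact .cov31
  | cov32 => exact .cov32
  | covOdd m h1 h2 => exact .covOdd m h1 (by omega)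
  | covBot m h1 h2 => exact .covBot m h1 (by omega)
  | covSide m h1 h2 => exact .covSide m h1 (by omega)

lemma snakeCov_top {c : ℕ} (h : SnakeCov (n + 1) w (2 * n + 4) c) :
    c = snakeSide w (n + 1) := by
  generalize hA : 2 * n + 4 = A at h
  cases h with
  | covSide m h1 h2 => rw [show m = n + 1 by omega]
  | _ => omega

lemma snakeCov_odd_odd {m : ℕ} (hm : m ≤ n) : SnakeCov n w (2 * m + 3) (2 * m + 1) := by
  cases m with
  | zero => exact .cov31
  | succ m => exact .covOdd (m + 1) (by omega) hm

lemma snakeCov_odd_even {m : ℕ} (hm : m ≤ n) : SnakeCov n w (2 * m + 3) (2 * m + 2) := by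
  cases m with
  | zero => exact .cov32
  | succ m => exact .covBot (m + 1) (by omega) hm

lemma snakeLE_odd {m x : ℕ} (hm : m ≤ n + 1) (hx : x ≤ 2 * m + 1) :
    SnakeLE n w (2 * m + 1) x := by
  induction m generalizing x with
  | zero =>
    obtain rfl | rfl : x = 0 ∨ x = 1 := by omega
    exacts [.single .cov10, .refl]
  | succ m ih =>
    obtain rfl | rfl | hx : x = 2 * m + 3 ∨ x = 2 * m + 2 ∨ x ≤ 2 * m + 1 := by omega
    · exact .refl
    · exact .single (snakeCov_odd_even (by omega))
    · exact .head (snakeCov_odd_odd (by omega)) (ih (by omega) hx)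

lemma mem_snakeFilters_iff {A : Set ℕ} :
    A ∈ SnakeFilters n w ↔
      (∀ a ∈ A, a < 2 * n + 4) ∧ ∀ a ∈ A, ∀ b, SnakeCov n w a b → b ∈ A := by
  refine ⟨fun h => ⟨h.1, fun a ha b hab => h.2 a ha b (.single hab)⟩,
    fun h => ⟨h.1, fun a ha b hab => ?_⟩⟩
  induction hab with
  | refl => exact ha
  | tail _ hc ih => exact h.2 _ ih _ hc

lemma snakeFilters_finite (n : ℕ) (w : ℕ → Letter) : (SnakeFilters n w).Finite :=
  (finite_Iio (2 * n + 4)).finite_subsets.subset fun _ hA x hx => hA.1 x hx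

end Basic

section Succ

variable {n : ℕ} {w : ℕ → Letter}

lemma snakeFilters_subset_succ : SnakeFilters n w ⊆ SnakeFilters (n + 1) w := by
  intro A hA
  rw [mem_snakeFilters_iff] at hA ⊢
  refine ⟨fun a ha => by linarith [hA.1 a ha], fun a ha b hab => ?_⟩
  exact hA.2 a ha b (hab.of_succ (hA.1 a ha))

lemma insert_mem_snakeFilters_succ {B : Set ℕ} (hB : B ∈ SnakeFilters n w)
    (hs : snakeSide w (n + 1) ∈ B) : insert (2 * n + 4) B ∈ SnakeFilters (n + 1) w := by
  rw [mem_snakeFilters_iff] at hB ⊢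
  refine ⟨?_, ?_⟩
  · rintro a (rfl | ha)
    exacts [by omega, by linarith [hB.1 a ha]]
  · rintro a (rfl | ha) b hab
    · exact Or.inr (snakeCov_top hab ▸ hs)
    · exact Or.inr (hB.2 a ha b (hab.of_succ (hB.1 a ha)))

lemma Iio_mem_snakeFilters : Iio (2 * n + 4) ∈ SnakeFilters n w :=
  ⟨fun _ ha => ha, fun _ ha _ hab => lt_of_le_of_lt (snakeLE_le hab) ha⟩

lemma eq_Iio_of_bot_mem {A : Set ℕ} (hA : A ∈ SnakeFilters n w) (h : 2 * n + 3 ∈ A) :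
    A = Iio (2 * n + 4) :=
  Subset.antisymm hA.1 fun x hx => hA.2 _ h x (snakeLE_odd (m := n + 1) le_rfl (by
    simp only [mem_Iio] at hx; omega))

lemma mem_snakeFilters_of_succ {A : Set ℕ} (hA : A ∈ SnakeFilters (n + 1) w)
    (h : 2 * n + 4 ∉ A) : A ∈ SnakeFilters n w := by
  have hbot : 2 * n + 5 ∉ A := fun h5 =>
    h (hA.2 _ h5 _ (.single (snakeCov_odd_even (m := n + 1) le_rfl)))
  rw [mem_snakeFilters_iff] at hA ⊢
  refine ⟨fun a ha => ?_, fun a ha b hab => hA.2 a ha b hab.succ⟩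
  have := hA.1 a ha
  have : a ≠ 2 * n + 4 := fun e => h (e ▸ ha)
  have : a ≠ 2 * n + 5 := fun e => hbot (e ▸ ha)
  omega

lemma sdiff_mem_snakeFilters_of_succ {A : Set ℕ} (hA : A ∈ SnakeFilters (n + 1) w)
    (h4 : 2 * n + 4 ∈ A) (h5 : 2 * n + 5 ∉ A) :
    A \ {2 * n + 4} ∈ SnakeFilters n w ∧ snakeSide w (n + 1) ∈ A \ {2 * n + 4} := by
  have hs : snakeSide w (n + 1) < 2 * n + 4 := by
    rcases snakeSide_eq_or w (n + 1) with h | h <;> omega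
  refine ⟨mem_snakeFilters_of_succ ⟨fun a ha => hA.1 a ha.1, fun a ha b hab => ?_⟩ (by simp),
    hA.2 _ h4 _ (.single (.covSide (n + 1) (by omega) le_rfl)), hs.ne⟩
  refine ⟨hA.2 a ha.1 b hab, fun hb => ?_⟩
  have := snakeLE_le hab
  have : a ≠ 2 * n + 5 := fun e => h5 (e ▸ ha.1)
  have := hA.1 a ha.1
  exact ha.2 (by simp only [mem_singleton_iff] at hb ⊢; omega)

lemma snakeFilters_succ_eq :
    SnakeFilters (n + 1) w = insert (Iio (2 * (n + 1) + 4)) (SnakeFilters n w ∪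
      insert (2 * n + 4) '' {B ∈ SnakeFilters n w | snakeSide w (n + 1) ∈ B}) := by
  refine Subset.antisymm (fun A hA => ?_) ?_
  · by_cases h5 : 2 * n + 5 ∈ A
    · exact Or.inl (eq_Iio_of_bot_mem hA h5)
    by_cases h4 : 2 * n + 4 ∈ A
    · exact Or.inr (Or.inr
        ⟨_, sdiff_mem_snakeFilters_of_succ hA h4 h5, insert_sdiff_self_of_mem h4⟩)
    · exact Or.inr (Or.inl (mem_snakeFilters_of_succ hA h4))
  · rintro A (rfl | hA | ⟨B, ⟨hB, hs⟩, rfl⟩)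
    exacts [Iio_mem_snakeFilters, snakeFilters_subset_succ hA,
      insert_mem_snakeFilters_succ hB hs]

lemma ncard_snakeFilters_succ (n : ℕ) (w : ℕ → Letter) :
    (SnakeFilters (n + 1) w).ncard =
      (SnakeFilters n w).ncard + {B ∈ SnakeFilters n w | snakeSide w (n + 1) ∈ B}.ncard + 1 := by
  set T := {B ∈ SnakeFilters n w | snakeSide w (n + 1) ∈ B}
  have hfin : (SnakeFilters n w).Finite := snakeFilters_finite n w
  have hT : T.Finite := hfin.subset fun _ h => h.1
  have not_top : ∀ B ∈ SnakeFilters n w, 2 * n + 4 ∉ B := fun B hB h => by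
    linarith [hB.1 _ h]
  have hI : Iio (2 * (n + 1) + 4) ∉ SnakeFilters n w ∪ insert (2 * n + 4) '' T := by
    rintro (h | ⟨B, hB, hBI⟩)
    · exact not_top _ h (by simp only [mem_Iio]; omega)
    · have : 2 * n + 5 ∈ insert (2 * n + 4) B := hBI ▸ (by simp only [mem_Iio]; omega)
      rcases this with h | h
      · omega
      · linarith [hB.1.1 _ h]
  have hdisj : Disjoint (SnakeFilters n w) (insert (2 * n + 4) '' T) := by
    rw [disjoint_left]
    rintro A hA ⟨B, -, rfl⟩
    exact not_top _ hA (mem_insert _ _)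
  have hinj : InjOn (insert (2 * n + 4)) T := fun B hB B' hB' h => by
    rw [← insert_sdiff_self_of_notMem (not_top B hB.1),
      ← insert_sdiff_self_of_notMem (not_top B' hB'.1), h]
  rw [snakeFilters_succ_eq, ncard_insert_of_notMem hI (hfin.union (hT.image _)),
    ncard_union_eq hdisj hfin (hT.image _), hinj.ncard_image]

end Succ

section Tail

/-- Suppose `w (k + 1) = ⋯ = w (n + 1)` and `e ∈ {2k+1, 2k+2}` is the element not covered by
`2k+4` (so `snakeSide w (k + 1) + e = 4k+3`). Then the filter of `P(w₀⋯wₙ)` generated by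
`snakeSide w (n + 1)` is `tailFilter n k e`, and its complement is the chain `tailChain k e`:
`e, 2k+3, 2k+5, …, 2n+3`, each element covered by the previous one. -/
def tailFilter (n k e : ℕ) : Set ℕ :=
  {x | (x ≤ 2 * k + 2 ∧ x ≠ e) ∨ (x % 2 = 0 ∧ 2 * k + 4 ≤ x ∧ x < 2 * n + 4)}

def tailChain (k e j : ℕ) : ℕ := if j = 0 then e else 2 * (k + j) + 1

lemma mem_tailFilter {n k e x : ℕ} :
    x ∈ tailFilter n k e ↔
      (x ≤ 2 * k + 2 ∧ x ≠ e) ∨ (x % 2 = 0 ∧ 2 * k + 4 ≤ x ∧ x < 2 * n + 4) :=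
  Iff.rfl

lemma mem_tailChain_image {k e i x : ℕ} :
    x ∈ tailChain k e '' Iio i ↔
      (0 < i ∧ x = e) ∨ (x % 2 = 1 ∧ 2 * k + 3 ≤ x ∧ x < 2 * k + 2 * i + 1) := by
  constructor
  · rintro ⟨j, hj, rfl⟩
    rw [mem_Iio] at hj
    unfold tailChain
    split_ifs <;> omega
  · rintro (⟨hi, rfl⟩ | hx)
    · exact ⟨0, hi, rfl⟩
    · refine ⟨(x - 2 * k - 1) / 2, mem_Iio.2 (by omega), ?_⟩
      rw [tailChain, if_neg (by omega)]
      omega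

variable {n k e : ℕ} {w : ℕ → Letter}

lemma snakeLE_even (hflat : ∀ m, k + 2 ≤ m → m ≤ n + 1 → snakeSide w m = 2 * m)
    {a b : ℕ} (ha : k + 1 ≤ a) (hab : a ≤ b) (hb : b ≤ n) :
    SnakeLE n w (2 * b + 2) (2 * a + 2) := by
  induction b, hab using Nat.le_induction with
  | base => exact .refl
  | succ b hab ih =>
    have hc := SnakeCov.covSide (n := n) (w := w) (b + 1) (by omega) hb
    rw [hflat (b + 1) (by omega) (by omega)] at hc
    exact .head hc (ih (by omega))

lemma snakeSide_top (hflat : ∀ m, k + 2 ≤ m → m ≤ n + 1 → snakeSide w m = 2 * m)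
    (hkn : k < n) : snakeSide w (n + 1) = 2 * n + 2 := by
  rw [hflat (n + 1) (by omega) le_rfl]; ring

lemma snakeSide_mem_tailFilter (hk : k ≤ n) (he : e = 2 * k + 2 ∨ e = 2 * k + 1 ∧ k = 0)
    (hside : snakeSide w (k + 1) + e = 4 * k + 3)
    (hflat : ∀ m, k + 2 ≤ m → m ≤ n + 1 → snakeSide w m = 2 * m) :
    snakeSide w (n + 1) ∈ tailFilter n k e := by
  rcases hk.eq_or_lt with rfl | hkn
  · rw [mem_tailFilter]; omega
  · rw [snakeSide_top hflat hkn, mem_tailFilter]; omega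

lemma snakeLE_of_mem_tailFilter (hk : k ≤ n) (he : e = 2 * k + 2 ∨ e = 2 * k + 1 ∧ k = 0)
    (hside : snakeSide w (k + 1) + e = 4 * k + 3)
    (hflat : ∀ m, k + 2 ≤ m → m ≤ n + 1 → snakeSide w m = 2 * m)
    {x : ℕ} (hx : x ∈ tailFilter n k e) : SnakeLE n w (snakeSide w (n + 1)) x := by
  have hturn : SnakeLE n w (snakeSide w (n + 1)) (snakeSide w (k + 1)) := by
    rcases hk.eq_or_lt with rfl | hkn
    · exact .refl
    · rw [snakeSide_top hflat hkn]
      exact (snakeLE_even hflat le_rfl hkn le_rfl).tail (.covSide (k + 1) (by omega) hkn)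
  rcases hx with ⟨hx, hxe⟩ | ⟨hx2, hkx, hxn⟩
  · refine hturn.trans ?_
    rcases he with rfl | ⟨rfl, rfl⟩
    · rw [show snakeSide w (k + 1) = 2 * k + 1 by omega]
      exact snakeLE_odd (by omega) (by omega)
    · rw [show snakeSide w (0 + 1) = 2 by omega]
      obtain rfl | rfl : x = 0 ∨ x = 2 := by omega
      exacts [.single .cov20, .refl]
  · rw [snakeSide_top hflat (by omega)]
    obtain ⟨a, rfl⟩ : ∃ a, x = 2 * a + 2 := ⟨x / 2 - 1, by omega⟩
    exact snakeLE_even hflat (by omega) (by omega) le_rfl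

lemma tailFilter_union_mem_snakeFilters (hk : k ≤ n)
    (he : e = 2 * k + 2 ∨ e = 2 * k + 1 ∧ k = 0)
    (hside : snakeSide w (k + 1) + e = 4 * k + 3)
    (hflat : ∀ m, k + 2 ≤ m → m ≤ n + 1 → snakeSide w m = 2 * m)
    {i : ℕ} (hi : i ≤ n - k + 2) :
    tailFilter n k e ∪ tailChain k e '' Iio i ∈ SnakeFilters n w := by
  simp only [mem_snakeFilters_iff, mem_union, mem_tailFilter, mem_tailChain_image]
  refine ⟨fun a ha => by omega, fun a ha b hab => ?_⟩
  cases hab with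
  | covSide m h1 h2 =>
    rcases lt_trichotomy m (k + 1) with hm | rfl | hm
    · rcases snakeSide_eq_or w m with h | h <;> rw [h] <;> omega
    · omega
    · rw [hflat m (by omega) (by omega)]; omega
  | _ => omega

lemma snakeCov_tailChain (hk : k ≤ n) (he : e = 2 * k + 2 ∨ e = 2 * k + 1 ∧ k = 0) {j : ℕ}
    (hj : j + 1 < n - k + 2) : SnakeCov n w (tailChain k e (j + 1)) (tailChain k e j) := by
  rw [tailChain, if_neg (by omega)]
  rcases j with _ | j
  · rcases he with rfl | ⟨rfl, rfl⟩
    · exact snakeCov_odd_even (by omega)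
    · exact snakeCov_odd_odd (m := 0) (by omega)
  · rw [tailChain, if_neg (by omega), show k + (j + 1 + 1) = (k + j + 1) + 1 by ring]
    exact snakeCov_odd_odd (by omega)

lemma ncard_snakeFilters_mem_snakeSide (hk : k ≤ n)
    (he : e = 2 * k + 2 ∨ e = 2 * k + 1 ∧ k = 0) (hside : snakeSide w (k + 1) + e = 4 * k + 3)
    (hflat : ∀ m, k + 2 ≤ m → m ≤ n + 1 → snakeSide w m = 2 * m) :
    {B ∈ SnakeFilters n w | snakeSide w (n + 1) ∈ B}.ncard = n - k + 3 := by
  refine ncard_eq_of_initial_segments (U := tailFilter n k e) (c := tailChain k e) ?_ ?_ ?_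
    (fun B hB j hj hc => hB.1.2 _ hc _ (.single (snakeCov_tailChain hk he hj)))
    fun i hi => ⟨tailFilter_union_mem_snakeFilters hk he hside hflat hi,
      Or.inl (snakeSide_mem_tailFilter hk he hside hflat)⟩
  · intro j hj
    rw [mem_tailFilter, tailChain]
    split_ifs <;> omega
  · intro i _ j _ h
    simp only [tailChain] at h
    split_ifs at h <;> omega
  · refine fun B ⟨hB, hs⟩ =>
      ⟨fun x hx => hB.2 _ hs x (snakeLE_of_mem_tailFilter hk he hside hflat hx), fun x hx => ?_⟩
    have := hB.1 x hx
    rw [mem_union, mem_tailFilter, mem_tailChain_image]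
    omega

end Tail

theorem stmt2 (n k : ℕ) (w : ℕ → Letter) (hk1 : k ≤ n)
    (hk2 : k = 0 ∨ w k ≠ w (n + 1))
    (hk3 : ∀ j, k < j → j ≤ n → w j = w (n + 1)) :
    (SnakeFilters (n + 1) w).ncard = (SnakeFilters n w).ncard + ((n + 1 - k) + 3) := by
  have hlast : ∀ j, k < j → j ≤ n + 1 → w j = w (n + 1) := fun j hkj hj => by
    rcases hj.lt_or_eq with hj | rfl
    exacts [hk3 j hkj (by omega), rfl]
  have hflat : ∀ m, k + 2 ≤ m → m ≤ n + 1 → snakeSide w m = 2 * m := fun m hkm hm =>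
    snakeSide_of_eq (by omega)
      ((hlast _ (by omega) (by omega)).trans (hlast m (by omega) hm).symm)
  obtain ⟨e, he, hside⟩ : ∃ e, (e = 2 * k + 2 ∨ e = 2 * k + 1 ∧ k = 0) ∧
      snakeSide w (k + 1) + e = 4 * k + 3 := by
    rcases Nat.eq_zero_or_pos k with rfl | hk
    · rcases snakeSide_eq_or w (0 + 1) with h | h
      exacts [⟨2, by omega, by omega⟩, ⟨1, by omega, by omega⟩]
    · have hturn : w k ≠ w (k + 1) :=
        (hlast (k + 1) (by omega) (by omega)) ▸ hk2.resolve_left hk.ne'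
      refine ⟨2 * k + 2, Or.inl rfl, ?_⟩
      rw [snakeSide_of_ne (by omega) (by simpa using hturn)]
      omega
  rw [ncard_snakeFilters_succ, ncard_snakeFilters_mem_snakeSide hk1 he hside hflat]
  omega
end

section
/- Let S_n := P(εLRLR⋯) denote the snake poset, built from the alternating generalized snake word of length n whose first letter is L. Then e(S_0) = 2, e(S_1) = 5, and e(S_n) = 2·e(S_{n−1}) + e(S_{n−2}) for all n ≥ 2; that is, the normalized volumes of the order polytopes O(S_n) satisfy the Pell recursion. -/
/-!
Read a linear extension bottom-up: it is a minimal element followed by a linear extension of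
the remaining poset, so `e(P) = ∑ e(P ∖ {m})` over the minimal elements `m` of `P`.
For the alternating word, `S_n` is the restriction to `{0, …, 2n+3}` of a single order on `ℕ`.
Its minimum is `2n+3`; removing it leaves the minimal elements `2n+1` and `2n+2`.
Removing `2n+2` leaves `S_{n-1}`. Removing `2n+1` instead leaves the minimal elements `2n` and
`2n+2`: deleting `2n+2` leaves `S_{n-1}` without its minimum `2n+1`, and deleting `2n` leaves
`S_{n-2}` together with `2n+2`, which lies below all of it.
Hence `e(S_n) = 2 e(S_{n-1}) + e(S_{n-2})`.
-/

open Finset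

section LinearExtensions

variable {α β : Type*} (r : α → α → Prop) [DecidableRel r]

/-- The linear extensions of `r` (read `r a b` as `a < b`) on `s`, each written as the list of
the elements of `s` in increasing order. -/
def linearExtensions (s : Finset α) : Finset (List α) :=
  (⟨s.val.lists, Multiset.lists_nodup_finset s⟩ : Finset (List α)).filter
    (List.Pairwise fun a b => ¬ r b a)

variable {r} {s : Finset α} {l : List α}

theorem mem_linearExtensions :
    l ∈ linearExtensions r s ↔ s.val = l ∧ l.Pairwise fun a b => ¬ r b a := by
  simp [linearExtensions]

theorem card_linearExtensions_empty : #(linearExtensions r ∅) = 1 := by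
  rw [card_eq_one]
  refine ⟨[], eq_singleton_iff_unique_mem.2 ⟨by simp [mem_linearExtensions], fun l hl => ?_⟩⟩
  simpa [eq_comm] using (mem_linearExtensions.1 hl).1

theorem linearExtensions_eq_biUnion [DecidableEq α] (hs : s.Nonempty) :
    linearExtensions r s = {m ∈ s | ∀ b ∈ s.erase m, ¬ r b m}.biUnion
      fun m => (linearExtensions r (s.erase m)).map ⟨List.cons m, List.cons_injective⟩ := by
  ext l
  simp only [mem_biUnion, mem_filter, mem_map, mem_linearExtensions, Function.Embedding.coeFn_mk]
  constructor
  · rintro ⟨hsl, hp⟩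
    cases l with
    | nil => exact absurd (val_eq_zero.1 hsl) hs.ne_empty
    | cons m t =>
      rw [List.pairwise_cons] at hp
      have hm : m ∈ s := by rw [← mem_val, hsl]; exact List.mem_cons_self
      have ht : (s.erase m).val = t := by
        rw [erase_val, hsl, ← Multiset.cons_coe, Multiset.erase_cons_head]
      refine ⟨m, ⟨hm, fun b hb => hp.1 b ?_⟩, t, ⟨ht, hp.2⟩, rfl⟩
      rwa [← mem_val, ht, Multiset.mem_coe] at hb
  · rintro ⟨m, ⟨hm, hmin⟩, t, ⟨ht, hp⟩, rfl⟩
    refine ⟨?_, List.pairwise_cons.2 ⟨fun b hb => hmin b ?_, hp⟩⟩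
    · rw [← Multiset.cons_coe, ← ht, erase_val, Multiset.cons_erase hm]
    · rwa [← mem_val, ht, Multiset.mem_coe]

theorem card_linearExtensions [DecidableEq α] (hs : s.Nonempty) :
    #(linearExtensions r s) =
      ∑ m ∈ s with ∀ b ∈ s.erase m, ¬ r b m, #(linearExtensions r (s.erase m)) := by
  rw [linearExtensions_eq_biUnion hs, card_biUnion]
  · simp only [card_map]
  · intro m _ m' _ hne
    simp only [Function.onFun, disjoint_left, mem_map, Function.Embedding.coeFn_mk]
    rintro _ ⟨t, -, rfl⟩ ⟨t', -, h⟩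
    exact hne (List.cons_eq_cons.1 h).1.symm

theorem card_linearExtensions_eq_sum_of_minimals [DecidableEq α] (M : Finset α) {w : α}
    (hw : w ∈ M) (hM : M ⊆ s) (hmin : ∀ m ∈ M, ∀ b ∈ s, b ≠ m → ¬ r b m)
    (hbelow : ∀ b ∈ s, b ∉ M → r w b) :
    #(linearExtensions r s) = ∑ m ∈ M, #(linearExtensions r (s.erase m)) := by
  rw [card_linearExtensions ⟨w, hM hw⟩]
  congr 1
  ext m
  simp only [mem_filter, mem_erase]
  refine ⟨fun ⟨hm, hmin'⟩ => ?_, fun hm => ⟨hM hm, fun b ⟨hbm, hb⟩ => hmin m hm b hb hbm⟩⟩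
  by_contra hmM
  exact hmin' w ⟨fun h => hmM (h ▸ hw), hM hw⟩ (hbelow m hm hmM)

theorem card_linearExtensions_map {r' : β → β → Prop} [DecidableRel r'] (g : α ↪ β)
    (hr : ∀ a b, r' (g a) (g b) ↔ r a b) :
    #(linearExtensions r' (s.map g)) = #(linearExtensions r s) := by
  suffices linearExtensions r' (s.map g) =
      (linearExtensions r s).map ⟨List.map g, List.map_injective_iff.2 g.injective⟩ by
    rw [this, card_map]
  ext l'
  simp only [mem_map, mem_linearExtensions, Function.Embedding.coeFn_mk]
  constructor
  · rintro ⟨hs, hp⟩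
    obtain ⟨l, rfl⟩ : l' ∈ Set.range (List.map g) := by
      rw [Set.range_list_map]
      intro x hx
      rw [← Multiset.mem_coe, ← hs, mem_val, mem_map] at hx
      obtain ⟨a, -, rfl⟩ := hx
      exact Set.mem_range_self a
    refine ⟨l, ⟨?_, ?_⟩, rfl⟩
    · apply Multiset.map_injective g.injective
      rw [← map_val, hs, Multiset.map_coe]
    · simpa [List.pairwise_map, hr] using hp
  · rintro ⟨l, ⟨hs, hp⟩, rfl⟩
    exact ⟨by rw [map_val, hs, Multiset.map_coe], by simpa [List.pairwise_map, hr] using hp⟩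

end LinearExtensions

section Monotone

variable {α : Type*} [Fintype α] [PartialOrder α] [DecidableLT α] {d : ℕ}

theorem ofFn_symm_mem_linearExtensions_iff (f : α ≃ Fin d) :
    List.ofFn f.symm ∈ linearExtensions (· < ·) (univ : Finset α) ↔ Monotone f := by
  have huniv : (univ : Finset α).val = List.ofFn f.symm :=
    (Multiset.Nodup.ext univ.nodup (Multiset.coe_nodup.2 (List.nodup_ofFn.2 f.symm.injective))).2
      fun a => by simpa using f.symm.surjective a
  rw [mem_linearExtensions, List.pairwise_ofFn]
  refine ⟨fun ⟨_, h⟩ a b hab => ?_, fun hf => ⟨huniv, fun i j hij hji => ?_⟩⟩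
  · by_contra hba
    rw [not_le] at hba
    have := h hba
    simp only [Equiv.symm_apply_apply] at this
    exact this (lt_of_le_of_ne hab fun e => by subst e; exact lt_irrefl _ hba)
  · exact (hf hji.le).not_gt (by simpa using hij)

theorem card_monotone_equiv_fin_eq_card_linearExtensions (hd : Fintype.card α = d) :
    Nat.card {f : α ≃ Fin d // Monotone f} = #(linearExtensions (· < ·) (univ : Finset α)) := by
  rw [← Nat.card_eq_finsetCard]
  refine Nat.card_eq_of_bijective
    (fun f => ⟨List.ofFn f.1.symm, (ofFn_symm_mem_linearExtensions_iff f.1).2 f.2⟩) ⟨?_, ?_⟩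
  · intro f g h
    exact Subtype.ext (Equiv.symm_bijective.injective <|
      Equiv.coe_fn_injective (List.ofFn_injective (Subtype.ext_iff.1 h)))
  · classical
    rintro ⟨l, hl⟩
    have huniv := (mem_linearExtensions.1 hl).1
    have hnd : l.Nodup := by rw [← Multiset.coe_nodup, ← huniv]; exact univ.nodup
    have hlen : l.length = d := by
      rw [← hd, ← card_univ, card_def, huniv, Multiset.coe_card]
    subst hlen
    set e := hnd.getEquivOfForallMemList l fun a => by rw [← Multiset.mem_coe, ← huniv]; simp
    have he : List.ofFn e = l := List.ofFn_get l
    refine ⟨⟨e.symm, (ofFn_symm_mem_linearExtensions_iff e.symm).1 (by simpa [he] using hl)⟩, ?_⟩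
    exact Subtype.ext (by simpa using he)

end Monotone

section Snake

/-- `a` lies strictly below `b` in the order on `ℕ` whose restriction to `{0, …, 2n+3}` is the
snake poset `S_n = P(ε L R L R ⋯)`. -/
def snakeLt (a b : ℕ) : Prop :=
  b < a ∧ (a % 2 = 1 ∨ 4 ≤ a ∧ b + 2 < a ∨ a = 2 ∧ b = 0)

instance : DecidableRel snakeLt := fun a b => by unfold snakeLt; infer_instance

theorem snakeLt_trans {a b c : ℕ} (hab : snakeLt a b) (hbc : snakeLt b c) : snakeLt a c := by
  unfold snakeLt at *; omega

theorem snakeSide_altWord {m : ℕ} (hm : 1 ≤ m) : snakeSide altWord m = 2 * m - 1 := by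
  refine if_pos ?_
  rcases (by omega : m = 1 ∨ 2 ≤ m) with rfl | hm2
  · exact .inl ⟨rfl, rfl⟩
  · refine .inr ⟨hm2, ?_⟩
    unfold altWord
    split_ifs <;> first | omega | simp

theorem snakeLt_of_snakeCov {n a b : ℕ} (h : SnakeCov n altWord a b) : snakeLt a b := by
  cases h with
  | covSide m h1 => rw [snakeSide_altWord h1]; unfold snakeLt; omega
  | _ => unfold snakeLt; omega

theorem snakeLE_altWord_iff {n a b : ℕ} (ha : a < 2 * n + 4) :
    SnakeLE n altWord a b ↔ a = b ∨ snakeLt a b := by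
  refine ⟨fun h => ?_, ?_⟩
  · induction h with
    | refl => exact .inl rfl
    | tail _ hc ih =>
      exact .inr (ih.elim (· ▸ snakeLt_of_snakeCov hc) (snakeLt_trans · (snakeLt_of_snakeCov hc)))
  · rintro (rfl | hab)
    · exact .refl
    induction a using Nat.strong_induction_on generalizing b with
    | _ a ih =>
    have step : ∀ c, SnakeCov n altWord a c → c = b ∨ snakeLt c b → SnakeLE n altWord a b := by
      rintro c hc (rfl | hcb)
      · exact .single hc
      · have hca := (snakeLt_of_snakeCov hc).1
        exact .head hc (ih c hca (by omega) hcb)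
    unfold snakeLt at hab
    rcases (by omega : a = 1 ∨ a = 2 ∨ a = 3 ∨ a % 2 = 1 ∧ 5 ≤ a ∨ a % 2 = 0 ∧ 4 ≤ a) with
      rfl | rfl | rfl | ⟨hodd, ha5⟩ | ⟨heven, ha4⟩
    · exact step 0 .cov10 (by omega)
    · exact step 0 .cov20 (by omega)
    · rcases (by omega : b = 2 ∨ b ≤ 1) with rfl | hb
      · exact step 2 .cov32 (.inl rfl)
      · exact step 1 .cov31 (by unfold snakeLt; omega)
    · obtain ⟨m, rfl⟩ : ∃ m, a = 2 * m + 3 := by exact ⟨(a - 3) / 2, by omega⟩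
      rcases (by omega : b = 2 * m + 2 ∨ b ≤ 2 * m + 1) with rfl | hb
      · exact step _ (.covBot m (by omega) (by omega)) (.inl rfl)
      · exact step _ (.covOdd m (by omega) (by omega)) (by unfold snakeLt; omega)
    · obtain ⟨m, rfl⟩ : ∃ m, a = 2 * m + 2 := by exact ⟨(a - 2) / 2, by omega⟩
      have hc := SnakeCov.covSide (n := n) (w := altWord) m (by omega) (by omega)
      rw [snakeSide_altWord (by omega)] at hc
      exact step _ hc (by unfold snakeLt; omega)

theorem snakePoset_lt_iff {n : ℕ} (a b : SnakePoset n altWord) : a < b ↔ snakeLt a.1 b.1 := by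
  have hne : a ≠ b ↔ a.1 ≠ b.1 := (Fin.val_injective (n := 2 * n + 4)).ne_iff.symm
  rw [lt_iff_le_and_ne, hne]
  change SnakeLE n altWord a.1 b.1 ∧ _ ↔ _
  rw [snakeLE_altWord_iff a.2]
  unfold snakeLt; omega

theorem linExtCount_altWord (n : ℕ) :
    linExtCount n altWord = #(linearExtensions snakeLt (range (2 * n + 4))) := by
  classical
  let _ : Fintype (SnakePoset n altWord) := inferInstanceAs (Fintype (Fin (2 * n + 4)))
  rw [← Nat.Iio_eq_range, ← Fin.map_valEmbedding_univ,
    card_linearExtensions_map Fin.valEmbedding fun a b => (snakePoset_lt_iff a b).symm]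
  exact card_monotone_equiv_fin_eq_card_linearExtensions (α := SnakePoset n altWord)
    (Fintype.card_fin _)

end Snake

section SnakeCount

local notation "e(" s ")" => #(linearExtensions snakeLt s)

theorem card_linearExtensions_snakeLt_range_even (k : ℕ) :
    e(range (2 * k + 2)) = e(range (2 * k + 1)) := by
  rw [card_linearExtensions_eq_sum_of_minimals {2 * k + 1} (mem_singleton_self _)
    (by simp) (fun m hm b hb hne => by simp at hm hb; unfold snakeLt; omega)
    (fun b hb hbM => by simp at hb hbM; unfold snakeLt; omega), sum_singleton]
  congr 2; ext; simp; omega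

theorem card_linearExtensions_snakeLt_range_odd (n : ℕ) :
    e(range (2 * n + 3)) = e(range (2 * n + 2)) + e((range (2 * n + 3)).erase (2 * n + 1)) := by
  rw [card_linearExtensions_eq_sum_of_minimals {2 * n + 1, 2 * n + 2} (mem_insert_self _ _)
    (by intro x; simp; omega) (fun m hm b hb hne => by simp at hm hb; unfold snakeLt; omega)
    (fun b hb hbM => by simp at hb hbM; unfold snakeLt; omega), sum_pair (by omega), add_comm]
  congr 3; ext; simp; omega

theorem card_linearExtensions_snakeLt_range_odd_erase {n : ℕ} (hn : 1 ≤ n) :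
    e((range (2 * n + 3)).erase (2 * n + 1)) = e(range (2 * n + 1)) + e(range (2 * n)) := by
  rw [card_linearExtensions_eq_sum_of_minimals {2 * n + 2, 2 * n} (mem_insert_self _ _)
    (by intro x; simp; omega) (fun m hm b hb hne => by simp at hm hb; unfold snakeLt; omega)
    (fun b hb hbM => by simp at hb hbM; unfold snakeLt; omega), sum_pair (by omega)]
  congr 1
  · congr 2; ext; simp; omega
  · rw [card_linearExtensions_eq_sum_of_minimals {2 * n + 2} (mem_singleton_self _)
      (by intro x; simp; omega) (fun m hm b hb hne => by simp at hm hb; unfold snakeLt; omega)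
      (fun b hb hbM => by simp at hb hbM; unfold snakeLt; omega), sum_singleton]
    congr 2; ext; simp; omega

theorem card_linearExtensions_snakeLt_pell (n : ℕ) :
    e(range (2 * n + 6)) = 2 * e(range (2 * n + 4)) + e(range (2 * n + 2)) := by
  have h₁ := card_linearExtensions_snakeLt_range_even (n + 2)
  have h₂ := card_linearExtensions_snakeLt_range_even (n + 1)
  have h₃ := card_linearExtensions_snakeLt_range_odd (n + 1)
  have h₄ := card_linearExtensions_snakeLt_range_odd_erase (n := n + 1) (by omega)
  ring_nf at h₁ h₂ h₃ h₄ ⊢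
  omega

theorem card_linearExtensions_snakeLt_range_one : e(range 1) = 1 := by
  rw [card_linearExtensions_eq_sum_of_minimals {0} (mem_singleton_self _) (by simp) (by simp)
    (by simp), sum_singleton, range_one, erase_singleton, card_linearExtensions_empty]

theorem card_linearExtensions_snakeLt_range_four : e(range 4) = 2 := by
  have h₂ := card_linearExtensions_snakeLt_range_even 0
  have h₃ := card_linearExtensions_snakeLt_range_odd 0
  have h₄ := card_linearExtensions_snakeLt_range_even 1
  have h₀₂ : e((range 3).erase 1) = e(range 1) := by
    rw [card_linearExtensions_eq_sum_of_minimals {2} (mem_singleton_self _) (by decide)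
      (by decide) (by decide), sum_singleton]
    rfl
  simp only [mul_zero, mul_one, zero_add] at h₂ h₃ h₄
  rw [h₄, h₃, h₂, h₀₂, card_linearExtensions_snakeLt_range_one]

end SnakeCount

theorem stmt4 :
    linExtCount 0 altWord = 2 ∧ linExtCount 1 altWord = 5 ∧
      ∀ n, 2 ≤ n →
        linExtCount n altWord =
          2 * linExtCount (n - 1) altWord + linExtCount (n - 2) altWord := by
  simp only [linExtCount_altWord]
  refine ⟨card_linearExtensions_snakeLt_range_four, ?_, fun n hn => ?_⟩
  · rw [card_linearExtensions_snakeLt_pell 0, card_linearExtensions_snakeLt_range_four,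
      card_linearExtensions_snakeLt_range_even 0, card_linearExtensions_snakeLt_range_one]
  · obtain ⟨m, rfl⟩ := Nat.exists_eq_add_of_le' hn
    simpa [Nat.mul_add, Nat.add_assoc] using card_linearExtensions_snakeLt_pell (m + 1)
end

section
/- Let 𝓛_n := P(εLL⋯L) denote the ladder poset, built from the generalized snake word of length n all of whose letters are L. Then for all n ≥ 0, e(𝓛_n) = Cat(n+2), the (n+2)-nd Catalan number Cat(m) = (1/(m+1))·binomial(2m, m); i.e., the normalized volume of the order polytope O(𝓛_n) equals Cat(n+2). -/
/-!
The ladder `P(εL⋯L)` is the product of chains `2 × (n+2)`: its elements sit in two columns of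
height `n+2`, and `a ≤ b` exactly when `a` is weakly left of and weakly below `b`. A linear
extension `f` of `2 × m` is recorded by the word whose `t`-th letter is `U` or `D` according to the
row of `f⁻¹ t`. Each row is filled in increasing order, so the word determines `f`, and the
constraints `f (0, j) < f (1, j)` say exactly that every prefix has at least as many `U`s as `D`s.
Conversely a Dyck word of semilength `m` yields an extension by placing the `j`-th element of each
row at the `j`-th occurrence of the corresponding letter. Hence `e(𝓛_n)` is the number of Dyck
words of semilength `n + 2`, which is `Cat(n+2)`.
-/

open Finset DyckStep

theorem List.count_take_ofFn {α : Type*} [DecidableEq α] {N : ℕ} (v : Fin N → α) (x : α)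
    (i : ℕ) : ((List.ofFn v).take i).count x = #{t : Fin N | v t = x ∧ (t : ℕ) < i} := by
  induction N generalizing i with
  | zero => simp
  | succ N ih =>
    rw [Fin.card_filter_univ_succ', List.ofFn_succ]
    cases i with
    | zero => simp
    | succ i => simp [List.count_cons, ih, add_comm]

theorem List.count_ofFn {α : Type*} [DecidableEq α] {N : ℕ} (v : Fin N → α) (x : α) :
    (List.ofFn v).count x = #{t : Fin N | v t = x} := by
  simpa [List.take_of_length_le] using List.count_take_ofFn v x N

theorem Finset.orderEmbOfFin_lt_of_card_le {α : Type*} [LinearOrder α] {A B : Finset α} {k : ℕ}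
    (hA : #A = k) (hB : #B = k) (hAB : Disjoint A B)
    (h : ∀ t, #{x ∈ B | x ≤ t} ≤ #{x ∈ A | x ≤ t}) (j : Fin k) :
    A.orderEmbOfFin hA j < B.orderEmbOfFin hB j := by
  set a := A.orderEmbOfFin hA
  set b := B.orderEmbOfFin hB j
  have hB_le : j.val + 1 ≤ #{x ∈ B | x ≤ b} := by
    rw [← Fin.card_Iic, ← card_map (B.orderEmbOfFin hB).toEmbedding]
    refine card_le_card fun x hx => ?_
    obtain ⟨i, hi, rfl⟩ := mem_map.mp hx
    exact mem_filter.mpr ⟨orderEmbOfFin_mem B hB i, (B.orderEmbOfFin hB).monotone (mem_Iic.mp hi)⟩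
  by_contra! hba
  have hb_ne : b ≠ a j := fun he =>
    disjoint_left.mp hAB (he ▸ orderEmbOfFin_mem A hA j : b ∈ A) (orderEmbOfFin_mem B hB j)
  -- as `b < a j`, every element of `A` up to `b` is one of the first `j` elements of `A`
  have hA_le : #{x ∈ A | x ≤ b} ≤ j.val := by
    rw [← Fin.card_Iio, ← card_map a.toEmbedding]
    refine card_le_card fun x hx => ?_
    obtain ⟨hxA, hxb⟩ := mem_filter.mp hx
    obtain ⟨i, rfl⟩ : x ∈ Set.range a := by rw [range_orderEmbOfFin]; exact hxA
    exact mem_map_of_mem _ (mem_Iio.mpr (a.lt_iff_lt.mp (hxb.trans_lt (hba.lt_of_ne hb_ne))))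
  have := h b
  omega

theorem card_monotone_equiv_congr {α β γ : Type*} [Preorder α] [Preorder β] [Preorder γ]
    (e : α ≃o β) : Nat.card {f : α ≃ γ // Monotone f} = Nat.card {f : β ≃ γ // Monotone f} :=
  Nat.card_congr
    { toFun f := ⟨e.symm.toEquiv.trans f.1, f.2.comp e.symm.monotone⟩
      invFun f := ⟨e.toEquiv.trans f.1, f.2.comp e.monotone⟩
      left_inv f := by ext; simp
      right_inv f := by ext; simp }

section TwoRowLinearExtensions

variable {m : ℕ}

def rowStep (c : Fin 2) : DyckStep := if c = 0 then U else D

theorem rowStep_injective : Function.Injective rowStep := by decide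

def stepWord (f : Fin 2 × Fin m ≃ Fin (2 * m)) (t : Fin (2 * m)) : DyckStep :=
  rowStep (f.symm t).1

theorem stepWord_eq_rowStep_iff {f : Fin 2 × Fin m ≃ Fin (2 * m)} {t : Fin (2 * m)}
    {c : Fin 2} : stepWord f t = rowStep c ↔ (f.symm t).1 = c :=
  rowStep_injective.eq_iff

theorem injective_row (f : Fin 2 × Fin m ≃ Fin (2 * m)) (c : Fin 2) :
    Function.Injective fun j => f (c, j) :=
  f.injective.comp (Prod.mk_right_injective c)

theorem range_row (f : Fin 2 × Fin m ≃ Fin (2 * m)) (c : Fin 2) :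
    Set.range (fun j => f (c, j)) = {t | stepWord f t = rowStep c} := by
  ext t
  simp only [Set.mem_range, Set.mem_ofPred_eq, stepWord_eq_rowStep_iff]
  constructor
  · rintro ⟨j, rfl⟩
    simp
  · intro h
    exact ⟨(f.symm t).2, by rw [← h, Prod.mk.eta, Equiv.apply_symm_apply]⟩

theorem card_stepWord_eq_rowStep (f : Fin 2 × Fin m ≃ Fin (2 * m)) (c : Fin 2) :
    #{t | stepWord f t = rowStep c} = m := by
  have : ({t | stepWord f t = rowStep c} : Finset _) = univ.image fun j => f (c, j) := by
    ext t
    simpa using (Set.ext_iff.mp (range_row f c) t).symm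
  rw [this, card_image_of_injective _ (injective_row f c), card_univ, Fintype.card_fin]

variable {f : Fin 2 × Fin m ≃ Fin (2 * m)}

theorem strictMono_row (hf : Monotone f) (c : Fin 2) : StrictMono fun j => f (c, j) :=
  (hf.comp (monotone_const.prodMk monotone_id)).strictMono_of_injective (injective_row f c)

theorem apply_zero_lt_apply_one (hf : Monotone f) (j : Fin m) : f (0, j) < f (1, j) :=
  (hf (Prod.mk_le_mk.mpr ⟨zero_le_one, le_rfl⟩)).lt_of_ne (f.injective.ne (by simp))

theorem card_stepWord_D_le_card_U (hf : Monotone f) (i : ℕ) :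
    #{t | stepWord f t = D ∧ (t : ℕ) < i} ≤ #{t | stepWord f t = U ∧ (t : ℕ) < i} := by
  refine card_le_card_of_injOn (fun t => f (0, (f.symm t).2)) (fun t ht => ?_)
    fun t ht t' ht' h => ?_
  · simp only [coe_filter, mem_univ, true_and, Set.mem_ofPred_eq] at ht ⊢
    have hrow : (f.symm t).1 = 1 := (stepWord_eq_rowStep_iff (c := 1)).mp ht.1
    refine ⟨(stepWord_eq_rowStep_iff (c := 0)).mpr (by simp), lt_trans ?_ ht.2⟩
    conv_rhs => rw [← f.apply_symm_apply t, ← Prod.mk.eta (p := f.symm t), hrow]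
    exact apply_zero_lt_apply_one hf _
  · simp only [coe_filter, mem_univ, true_and, Set.mem_ofPred_eq] at ht ht'
    have hrow : (f.symm t).1 = (f.symm t').1 := by
      rw [(stepWord_eq_rowStep_iff (c := 1)).mp ht.1, (stepWord_eq_rowStep_iff (c := 1)).mp ht'.1]
    have hcol : (f.symm t).2 = (f.symm t').2 := injective_row f 0 h
    exact f.symm.injective (Prod.ext hrow hcol)

theorem eq_of_stepWord_eq {g : Fin 2 × Fin m ≃ Fin (2 * m)} (hf : Monotone f) (hg : Monotone g)
    (h : stepWord f = stepWord g) : f = g := by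
  have hrow (c : Fin 2) : (fun j => f (c, j)) = fun j => g (c, j) :=
    ((strictMono_row hf c).range_inj (strictMono_row hg c)).mp (by rw [range_row, range_row, h])
  exact Equiv.ext fun x => congrFun (hrow x.1) x.2

def toDyckWord (f : {f : Fin 2 × Fin m ≃ Fin (2 * m) // Monotone f}) :
    {p : DyckWord // p.semilength = m} :=
  ⟨{ toList := List.ofFn (stepWord f.1)
     count_U_eq_count_D := by
       rw [List.count_ofFn, List.count_ofFn]
       exact (card_stepWord_eq_rowStep f.1 0).trans (card_stepWord_eq_rowStep f.1 1).symm
     count_D_le_count_U i := by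
       rw [List.count_take_ofFn, List.count_take_ofFn]
       exact card_stepWord_D_le_card_U f.2 i },
    (List.count_ofFn _ _).trans (card_stepWord_eq_rowStep f.1 0)⟩

theorem toDyckWord_injective : Function.Injective (toDyckWord (m := m)) := fun f g h =>
  Subtype.ext <| eq_of_stepWord_eq f.2 g.2 <| List.ofFn_injective <|
    congrArg DyckWord.toList (congrArg Subtype.val h)

theorem DyckWord.length_toList_of_semilength_eq {p : DyckWord} (hp : p.semilength = m) :
    p.toList.length = 2 * m := by
  rw [← p.two_mul_semilength_eq_length, hp]

variable {p : DyckWord} (hp : p.semilength = m)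

def stepAt (t : Fin (2 * m)) : DyckStep :=
  p.toList.get (t.cast (p.length_toList_of_semilength_eq hp).symm)

theorem ofFn_stepAt : List.ofFn (stepAt hp) = p.toList := by
  refine List.ext_getElem (by simp [p.length_toList_of_semilength_eq hp]) fun i _ _ => ?_
  simp [stepAt]

theorem card_stepAt_eq_rowStep (c : Fin 2) : #{t | stepAt hp t = rowStep c} = m := by
  rw [← List.count_ofFn, ofFn_stepAt]
  fin_cases c
  · exact hp
  · exact DyckWord.semilength_eq_count_D.symm.trans hp

def rowEmb (c : Fin 2) : Fin m ↪o Fin (2 * m) :=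
  orderEmbOfFin _ (card_stepAt_eq_rowStep hp c)

theorem stepAt_rowEmb (c : Fin 2) (j : Fin m) : stepAt hp (rowEmb hp c j) = rowStep c :=
  (mem_filter.mp (orderEmbOfFin_mem _ (card_stepAt_eq_rowStep hp c) j)).2

theorem rowEmb_zero_lt_rowEmb_one (j : Fin m) : rowEmb hp 0 j < rowEmb hp 1 j := by
  refine orderEmbOfFin_lt_of_card_le _ _ ?_ (fun t => ?_) j
  · exact disjoint_filter.mpr fun t _ h0 h1 => by simp [h0, rowStep] at h1
  · have := p.count_D_le_count_U (t + 1)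
    rw [← ofFn_stepAt hp, List.count_take_ofFn, List.count_take_ofFn] at this
    have hprefix (x : DyckStep) : #{s ∈ ({s | stepAt hp s = x} : Finset (Fin (2 * m))) | s ≤ t} =
        #{s | stepAt hp s = x ∧ (s : ℕ) < (t : ℕ) + 1} := by
      rw [filter_filter]
      exact congrArg card (filter_congr fun s _ => and_congr_right' Nat.lt_succ_iff.symm)
    rwa [hprefix, hprefix]

theorem injective_rowEmb : Function.Injective fun x : Fin 2 × Fin m => rowEmb hp x.1 x.2 := by
  rintro ⟨c, j⟩ ⟨c', j'⟩ h
  have hc : c = c' := rowStep_injective <| by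
    rw [← stepAt_rowEmb hp c j, ← stepAt_rowEmb hp c' j']; exact congrArg _ h
  subst hc
  simpa using h

noncomputable def ofDyckWord : Fin 2 × Fin m ≃ Fin (2 * m) :=
  Equiv.ofBijective _
    ((Fintype.bijective_iff_injective_and_card _).mpr ⟨injective_rowEmb hp, by simp⟩)

theorem monotone_ofDyckWord : Monotone (ofDyckWord hp) := by
  rintro ⟨c, j⟩ ⟨c', j'⟩ ⟨hc, hj : j ≤ j'⟩
  change rowEmb hp c j ≤ rowEmb hp c' j'
  fin_cases c <;> fin_cases c'
  · exact (rowEmb hp 0).monotone hj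
  · exact ((rowEmb hp 0).monotone hj).trans (rowEmb_zero_lt_rowEmb_one hp j').le
  · simp at hc
  · exact (rowEmb hp 1).monotone hj

theorem stepWord_ofDyckWord : stepWord (ofDyckWord hp) = stepAt hp := by
  funext t
  obtain ⟨⟨c, j⟩, rfl⟩ := (ofDyckWord hp).surjective t
  simp only [stepWord, Equiv.symm_apply_apply]
  exact (stepAt_rowEmb hp c j).symm

theorem toDyckWord_surjective : Function.Surjective (toDyckWord (m := m)) := fun ⟨p, hp⟩ =>
  ⟨⟨ofDyckWord hp, monotone_ofDyckWord hp⟩, Subtype.ext <| DyckWord.ext <| by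
    simp only [toDyckWord, stepWord_ofDyckWord, ofFn_stepAt]⟩

theorem card_monotone_equiv_fin_two_prod {N : ℕ} (hN : 2 * m = N) :
    Nat.card {f : Fin 2 × Fin m ≃ Fin N // Monotone f} = catalan m := by
  subst hN
  rw [Nat.card_eq_of_bijective _ ⟨toDyckWord_injective, toDyckWord_surjective⟩,
    Nat.card_eq_fintype_card, DyckWord.card_dyckWord_semilength_eq_catalan]

end TwoRowLinearExtensions

section Ladder

abbrev allL : ℕ → Letter := fun _ => Letter.L

/- Column `0` of the ladder is the chain `2n+3 ≺ 2n+1 ≺ ⋯ ≺ 5 ≺ 3 ≺ 2` and column `1` the chain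
`2n+2 ≺ 2n ≺ ⋯ ≺ 4 ≺ 1 ≺ 0`; `ladderElt n c j` is the element of column `c` at height `j`
(counted from `0` at the bottom), and `ladderCol`, `ladderHeight` are the inverse coordinates. -/
def ladderCol (a : ℕ) : ℕ :=
  if a = 2 then 0 else if a ≤ 1 then 1 else if a % 2 = 0 then 1 else 0

def ladderHeight (n a : ℕ) : ℕ :=
  if a = 0 ∨ a = 2 then n + 1 else if a = 1 then n else n + 1 - a / 2

def ladderElt (n c j : ℕ) : ℕ :=
  if j = n + 1 then (if c = 0 then 2 else 0)
  else if c = 1 ∧ j = n then 1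
  else 2 * (n - j) + 3 - c

variable {n : ℕ}

theorem ladderElt_lt {c j : ℕ} (hj : j ≤ n + 1) : ladderElt n c j < 2 * n + 4 := by
  unfold ladderElt; split_ifs <;> omega

theorem ladderCol_le_one (a : ℕ) : ladderCol a ≤ 1 := by
  unfold ladderCol; split_ifs <;> omega

theorem ladderHeight_le {a : ℕ} (ha : a < 2 * n + 4) : ladderHeight n a ≤ n + 1 := by
  unfold ladderHeight; split_ifs <;> omega

theorem ladderCol_ladderElt {c j : ℕ} (hc : c ≤ 1) (hj : j ≤ n + 1) :
    ladderCol (ladderElt n c j) = c := by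
  unfold ladderElt ladderCol; split_ifs <;> first | omega | simp_all

theorem ladderHeight_ladderElt {c j : ℕ} (hc : c ≤ 1) (hj : j ≤ n + 1) :
    ladderHeight n (ladderElt n c j) = j := by
  unfold ladderElt ladderHeight; split_ifs <;> first | omega | simp_all

theorem ladderElt_ladderCol_ladderHeight {a : ℕ} (ha : a < 2 * n + 4) :
    ladderElt n (ladderCol a) (ladderHeight n a) = a := by
  unfold ladderCol ladderHeight ladderElt; split_ifs <;> first | omega | simp_all

theorem snakeSide_allL (m : ℕ) : snakeSide allL m = if m = 1 then 1 else 2 * m := by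
  unfold snakeSide; split_ifs <;> simp_all

theorem snakeCov_ladderElt_succ {c j : ℕ} (hc : c ≤ 1) (hj : j ≤ n) :
    SnakeCov n allL (ladderElt n c j) (ladderElt n c (j + 1)) := by
  obtain rfl | rfl : c = 0 ∨ c = 1 := by omega
  · obtain hj | rfl := hj.lt_or_eq
    · convert @SnakeCov.covOdd n allL (n - j) (by omega) (by omega) using 1 <;>
        unfold ladderElt <;> split_ifs <;> first | omega | simp_all
    · convert SnakeCov.cov32 using 1 <;> unfold ladderElt <;> simp
  · obtain hj | rfl := hj.lt_or_eq
    · convert @SnakeCov.covSide n allL (n - j) (by omega) (by omega) using 1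
      · unfold ladderElt; split_ifs <;> omega
      · rw [snakeSide_allL]; unfold ladderElt; split_ifs <;> omega
    · convert SnakeCov.cov10 using 1 <;> unfold ladderElt <;> simp

theorem snakeCov_ladderElt_zero_one {j : ℕ} (hj : j ≤ n + 1) :
    SnakeCov n allL (ladderElt n 0 j) (ladderElt n 1 j) := by
  obtain hj | rfl | rfl : j < n ∨ j = n ∨ j = n + 1 := by omega
  · convert @SnakeCov.covBot n allL (n - j) (by omega) (by omega) using 1 <;>
      unfold ladderElt <;> split_ifs <;> omega
  · convert SnakeCov.cov31 using 1 <;> unfold ladderElt <;> simp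
  · convert SnakeCov.cov20 using 1 <;> unfold ladderElt <;> simp

theorem snakeLE_ladderElt_of_le {c j j' : ℕ} (hc : c ≤ 1) (hj : j ≤ j') (hj' : j' ≤ n + 1) :
    SnakeLE n allL (ladderElt n c j) (ladderElt n c j') := by
  induction j', hj using Nat.le_induction with
  | base => exact .refl
  | succ k hjk ih => exact (ih (by omega)).tail (snakeCov_ladderElt_succ hc (by omega))

theorem snakeLE_ladderElt {c c' j j' : ℕ} (hc : c ≤ c') (hc' : c' ≤ 1) (hj : j ≤ j')
    (hj' : j' ≤ n + 1) : SnakeLE n allL (ladderElt n c j) (ladderElt n c' j') := by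
  obtain rfl | ⟨rfl, rfl⟩ : c = c' ∨ c = 0 ∧ c' = 1 := by omega
  · exact snakeLE_ladderElt_of_le hc' hj hj'
  · exact (snakeLE_ladderElt_of_le zero_le_one hj hj').tail (snakeCov_ladderElt_zero_one hj')

theorem ladderCoord_le_of_snakeCov {a b : ℕ} (h : SnakeCov n allL a b) :
    ladderCol a ≤ ladderCol b ∧ ladderHeight n a ≤ ladderHeight n b := by
  cases h <;> simp only [ladderCol, ladderHeight, snakeSide_allL] <;> split_ifs <;>
    first | omega | simp_all

theorem ladderCoord_le_of_snakeLE {a b : ℕ} (h : SnakeLE n allL a b) :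
    ladderCol a ≤ ladderCol b ∧ ladderHeight n a ≤ ladderHeight n b := by
  induction h with
  | refl => exact ⟨le_rfl, le_rfl⟩
  | tail _ hab ih =>
    have := ladderCoord_le_of_snakeCov hab
    exact ⟨ih.1.trans this.1, ih.2.trans this.2⟩

end Ladder

def ladderOrderIso (n : ℕ) : SnakePoset n allL ≃o Fin 2 × Fin (n + 2) where
  toFun a := (⟨ladderCol a.1, by have := ladderCol_le_one a.1; omega⟩,
    ⟨ladderHeight n a.1, by have := ladderHeight_le a.2; omega⟩)
  invFun x := ⟨ladderElt n x.1 x.2, ladderElt_lt (by omega)⟩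
  left_inv a := Fin.ext (ladderElt_ladderCol_ladderHeight a.2)
  right_inv x := Prod.ext (Fin.ext (ladderCol_ladderElt (by omega) (by omega)))
    (Fin.ext (ladderHeight_ladderElt (by omega) (by omega)))
  map_rel_iff' {a b} := by
    refine ⟨fun h => ?_, fun h => ladderCoord_le_of_snakeLE h⟩
    change SnakeLE n allL a.1 b.1
    rw [← ladderElt_ladderCol_ladderHeight a.2, ← ladderElt_ladderCol_ladderHeight b.2]
    exact snakeLE_ladderElt h.1 (ladderCol_le_one _) h.2 (ladderHeight_le b.2)

theorem stmt5 (n : ℕ) :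
    linExtCount n (fun _ => Letter.L) = catalan (n + 2) :=
  (card_monotone_equiv_congr (ladderOrderIso n)).trans
    (card_monotone_equiv_fin_two_prod (by ring))
end
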